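/- arXiv:math/0212355 — 4 statements merged into one kernel-verified Lean document; each statement's English description precedes it below -/
import Mathlib

section
/- The Hilbert distance on the open unit disk is a metric: for distinct points x, y in the open unit disk D², let a, b be the two intersection points of the line through x and y with the unit circle, ordered so that a, x, y, b appear in this order; then d_H(x,y) := -(1/2) log [x,y;a,b] is positive, symmetric, and satisfies the triangle inequality on D². -/
/-! Parametrising the chord through `x` and `y` as `a + s • (b - a)`, the cross ratio
`[x,y;a,b]` depends only on the parameters, and `cosh` of `-(1/2) log [x,y;a,b]` equals
`(1 - ⟪x, y⟫) / √((1 - ‖x‖²) (1 - ‖y‖²))`: the Hilbert distance on the disk is the distance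
of the Klein model of the hyperbolic plane. Writing `g` for this expression, the triangle
inequality `d x z ≤ d x y + d y z` follows from `cosh (α + β) = cosh α cosh β + sinh α sinh β`
once `(g x z - g x y g y z)² ≤ (g x y² - 1)(g y z² - 1)`, which is the nonnegativity of the
Lorentzian Gram determinant of `(1, x), (1, y), (1, z)`: in the plane it is the square of the
ordinary determinant of these three vectors. -/

open scoped RealInnerProductSpace

abbrev E2 := EuclideanSpace ℝ (Fin 2)

open Real

theorem exists_roots_of_neg_at_zero_one {a b c : ℝ} (ha : 0 < a) (h₀ : c < 0)
    (h₁ : a + b + c < 0) :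
    ∃ s₁ s₂ : ℝ, s₁ < 0 ∧ 1 < s₂ ∧ a * s₁ ^ 2 + b * s₁ + c = 0 ∧ a * s₂ ^ 2 + b * s₂ + c = 0 := by
  set D := discrim a b c
  have hD : b ^ 2 < D := by simp only [D, discrim]; nlinarith
  have hsD : √D * √D = D := mul_self_sqrt (by nlinarith)
  have hb : |b| < √D := abs_lt_of_sq_lt_sq (by rwa [sq_sqrt (by nlinarith)]) (sqrt_nonneg D)
  have h2ab : |2 * a + b| < √D := by
    refine abs_lt_of_sq_lt_sq ?_ (sqrt_nonneg D)
    rw [sq_sqrt (by nlinarith)]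
    simp only [D, discrim]; nlinarith
  have hroot := quadratic_eq_zero_iff ha.ne' hsD.symm
  refine ⟨(-b - √D) / (2 * a), (-b + √D) / (2 * a), ?_, ?_, ?_, ?_⟩
  · exact div_neg_of_neg_of_pos (by linarith [neg_abs_le b]) (by positivity)
  · rw [one_lt_div (by positivity)]
    linarith [le_abs_self (2 * a + b)]
  · rw [sq]; exact (hroot _).2 (Or.inr rfl)
  · rw [sq]; exact (hroot _).2 (Or.inl rfl)

noncomputable def crossRatio {P : Type*} [MetricSpace P] (x y a b : P) : ℝ :=
  dist x a * dist y b / (dist y a * dist x b)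

theorem crossRatio_chord {E : Type*} [NormedAddCommGroup E] [NormedSpace ℝ E] {a b : E}
    (hab : a ≠ b) {t u : ℝ} (ht : 0 < t) (htu : t < u) (hu : u < 1) :
    crossRatio (a + t • (b - a)) (a + u • (b - a)) a b = t * (1 - u) / (u * (1 - t)) := by
  have hline : ∀ s : ℝ, a + s • (b - a) = AffineMap.lineMap a b s := fun s => by
    rw [AffineMap.lineMap_apply_module', add_comm]
  have hd : 0 < dist a b := dist_pos.2 hab
  simp only [crossRatio, hline, dist_lineMap_left, dist_lineMap_right, norm_eq_abs]
  rw [abs_of_pos ht, abs_of_pos (by linarith : 0 < u), abs_of_pos (by linarith : 0 < 1 - u),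
    abs_of_pos (by linarith : 0 < 1 - t)]
  field_simp

theorem cosh_neg_half_mul_log {r : ℝ} (hr : 0 < r) :
    cosh (-(1 / 2) * log r) = (r + 1) / (2 * √r) := by
  have hs : 0 < √r := sqrt_pos.2 hr
  rw [show -(1 / 2) * log r = -log √r by rw [log_sqrt hr.le]; ring, cosh_neg, cosh_log hs]
  field_simp
  rw [sq_sqrt hr.le]

section InnerProductSpace

variable {E : Type*} [NormedAddCommGroup E] [InnerProductSpace ℝ E]

theorem norm_add_smul_sq (x v : E) (s : ℝ) :
    ‖x + s • v‖ ^ 2 = ‖v‖ ^ 2 * s ^ 2 + 2 * ⟪x, v⟫ * s + ‖x‖ ^ 2 := by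
  rw [norm_add_sq_real, real_inner_smul_right, norm_smul, norm_eq_abs, mul_pow, sq_abs]
  ring

theorem exists_chord {x y : E} (hx : ‖x‖ < 1) (hy : ‖y‖ < 1) (hxy : x ≠ y) :
    ∃ a b : E, ∃ t u : ℝ, ‖a‖ = 1 ∧ ‖b‖ = 1 ∧ 0 < t ∧ t < u ∧ u < 1 ∧
      x = a + t • (b - a) ∧ y = a + u • (b - a) := by
  set v := y - x
  have hv : 0 < ‖v‖ := norm_pos_iff.2 (sub_ne_zero.2 hxy.symm)
  have hy' : ‖x + (1 : ℝ) • v‖ = ‖y‖ := by simp [v]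
  have hy2 := norm_add_smul_sq x v 1
  rw [hy'] at hy2
  obtain ⟨s₁, s₂, hs₁, hs₂, hr₁, hr₂⟩ :=
    exists_roots_of_neg_at_zero_one (a := ‖v‖ ^ 2) (b := 2 * ⟪x, v⟫) (c := ‖x‖ ^ 2 - 1)
      (by positivity) (by nlinarith [norm_nonneg x]) (by nlinarith [norm_nonneg y])
  have on_sphere : ∀ s, ‖v‖ ^ 2 * s ^ 2 + 2 * ⟪x, v⟫ * s + (‖x‖ ^ 2 - 1) = 0 →
      ‖x + s • v‖ = 1 := fun s hs => by
    have := norm_add_smul_sq x v s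
    nlinarith [norm_nonneg (x + s • v)]
  have hchord : (x + s₂ • v) - (x + s₁ • v) = (s₂ - s₁) • v := by module
  have hs : s₂ - s₁ ≠ 0 := by linarith
  refine ⟨x + s₁ • v, x + s₂ • v, -s₁ / (s₂ - s₁), (1 - s₁) / (s₂ - s₁), on_sphere s₁ hr₁,
    on_sphere s₂ hr₂, div_pos (by linarith) (by linarith), ?_, ?_, ?_, ?_⟩
  · exact div_lt_div_of_pos_right (by linarith) (by linarith)
  · rw [div_lt_one (by linarith)]; linarith
  · rw [hchord, smul_smul, div_mul_cancel₀ _ hs]; module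
  · rw [hchord, smul_smul, div_mul_cancel₀ _ hs]; simp only [v]; module

noncomputable def kleinCosh (x y : E) : ℝ := (1 - ⟪x, y⟫) / √((1 - ‖x‖ ^ 2) * (1 - ‖y‖ ^ 2))

theorem kleinCosh_comm (x y : E) : kleinCosh x y = kleinCosh y x := by
  rw [kleinCosh, kleinCosh, real_inner_comm, mul_comm]

theorem kleinCosh_self {x : E} (hx : ‖x‖ < 1) : kleinCosh x x = 1 := by
  have hx' : 0 < 1 - ‖x‖ ^ 2 := by nlinarith [norm_nonneg x]
  rw [kleinCosh, real_inner_self_eq_norm_sq, ← sq, sqrt_sq hx'.le, div_self hx'.ne']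

theorem inner_chord {a b : E} (ha : ‖a‖ = 1) (hb : ‖b‖ = 1) (t u : ℝ) :
    ⟪a + t • (b - a), a + u • (b - a)⟫ = 1 - (t + u - 2 * t * u) / 2 * ‖b - a‖ ^ 2 := by
  have hab : ⟪a, b - a⟫ = -‖b - a‖ ^ 2 / 2 := by
    have := norm_add_sq_real a (b - a)
    rw [add_sub_cancel, ha, hb] at this
    linarith
  have hba : ⟪b - a, a⟫ = -‖b - a‖ ^ 2 / 2 := by rw [real_inner_comm, hab]
  simp only [inner_add_left, inner_add_right, real_inner_smul_left, real_inner_smul_right, hab,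
    hba, real_inner_self_eq_norm_sq, ha]
  ring

theorem norm_chord_sq {a b : E} (ha : ‖a‖ = 1) (hb : ‖b‖ = 1) (t : ℝ) :
    ‖a + t • (b - a)‖ ^ 2 = 1 - t * (1 - t) * ‖b - a‖ ^ 2 := by
  rw [← real_inner_self_eq_norm_sq, inner_chord ha hb]
  ring

theorem kleinCosh_chord {a b : E} (ha : ‖a‖ = 1) (hb : ‖b‖ = 1) (hab : a ≠ b) {t u : ℝ}
    (ht : 0 < t) (htu : t < u) (hu : u < 1) :
    kleinCosh (a + t • (b - a)) (a + u • (b - a)) =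
      (t * (1 - u) / (u * (1 - t)) + 1) / (2 * √(t * (1 - u) / (u * (1 - t)))) := by
  have hn : 0 < ‖b - a‖ := norm_pos_iff.2 (sub_ne_zero.2 hab.symm)
  have hp : 0 < t * (1 - u) := mul_pos ht (by linarith)
  have hq : 0 < u * (1 - t) := mul_pos (by linarith) (by linarith)
  obtain ⟨p, p_pos, hp2⟩ : ∃ p, 0 < p ∧ p ^ 2 = t * (1 - u) := ⟨_, sqrt_pos.2 hp, sq_sqrt hp.le⟩
  obtain ⟨q, q_pos, hq2⟩ : ∃ q, 0 < q ∧ q ^ 2 = u * (1 - t) := ⟨_, sqrt_pos.2 hq, sq_sqrt hq.le⟩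
  have hprod : (1 - ‖a + t • (b - a)‖ ^ 2) * (1 - ‖a + u • (b - a)‖ ^ 2) =
      (p * q * ‖b - a‖ ^ 2) ^ 2 := by
    rw [norm_chord_sq ha hb, norm_chord_sq ha hb]
    linear_combination -(‖b - a‖ ^ 2) ^ 2 * (q ^ 2 * hp2 + t * (1 - u) * hq2)
  rw [kleinCosh, hprod, sqrt_sq (by positivity), inner_chord ha hb, ← hp2, ← hq2,
    sqrt_div' _ (sq_nonneg q), sqrt_sq p_pos.le, sqrt_sq q_pos.le, sub_sub_cancel]
  field_simp
  linear_combination -(hp2 + hq2)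

theorem neg_half_mul_log_crossRatio_chord_pos {a b : E} (hab : a ≠ b) {t u : ℝ} (ht : 0 < t)
    (htu : t < u) (hu : u < 1) :
    0 < -(1 / 2) * log (crossRatio (a + t • (b - a)) (a + u • (b - a)) a b) := by
  rw [crossRatio_chord hab ht htu hu]
  have hlt : t * (1 - u) / (u * (1 - t)) < 1 := by
    rw [div_lt_one (mul_pos (by linarith) (by linarith))]
    nlinarith
  have := log_neg (div_pos (mul_pos ht (by linarith)) (mul_pos (by linarith) (by linarith))) hlt
  linarith

theorem cosh_neg_half_mul_log_crossRatio_chord {a b : E} (ha : ‖a‖ = 1) (hb : ‖b‖ = 1)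
    (hab : a ≠ b) {t u : ℝ} (ht : 0 < t) (htu : t < u) (hu : u < 1) :
    cosh (-(1 / 2) * log (crossRatio (a + t • (b - a)) (a + u • (b - a)) a b)) =
      kleinCosh (a + t • (b - a)) (a + u • (b - a)) := by
  rw [crossRatio_chord hab ht htu hu, kleinCosh_chord ha hb hab ht htu hu,
    cosh_neg_half_mul_log (div_pos (mul_pos ht (by linarith)) (mul_pos (by linarith) (by linarith)))]

end InnerProductSpace

theorem EuclideanSpace.inner_fin_two (v w : EuclideanSpace ℝ (Fin 2)) : ⟪v, w⟫ = v 0 * w 0 + v 1 * w 1 := by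
  simp [PiLp.inner_apply, Fin.sum_univ_two, mul_comm]

theorem lorentz_gram_det_nonneg (x y z : E2) :
    0 ≤ (1 - ‖x‖ ^ 2) * (1 - ‖y‖ ^ 2) * (1 - ‖z‖ ^ 2)
      + 2 * (1 - ⟪x, y⟫) * (1 - ⟪x, z⟫) * (1 - ⟪y, z⟫)
      - (1 - ⟪x, y⟫) ^ 2 * (1 - ‖z‖ ^ 2) - (1 - ⟪x, z⟫) ^ 2 * (1 - ‖y‖ ^ 2)
      - (1 - ⟪y, z⟫) ^ 2 * (1 - ‖x‖ ^ 2) := by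
  simp only [← real_inner_self_eq_norm_sq, EuclideanSpace.inner_fin_two]
  linear_combination sq_nonneg ((y 0 - x 0) * (z 1 - x 1) - (y 1 - x 1) * (z 0 - x 0))

theorem kleinCosh_gram {x y z : E2} (hx : ‖x‖ < 1) (hy : ‖y‖ < 1) (hz : ‖z‖ < 1) :
    (kleinCosh x z - kleinCosh x y * kleinCosh y z) ^ 2 ≤
      (kleinCosh x y ^ 2 - 1) * (kleinCosh y z ^ 2 - 1) := by
  have hroot : ∀ v : E2, ‖v‖ < 1 → ∃ m, 0 < m ∧ m ^ 2 = 1 - ‖v‖ ^ 2 := fun v hv =>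
    have : 0 < 1 - ‖v‖ ^ 2 := by nlinarith [norm_nonneg v]
    ⟨_, sqrt_pos.2 this, sq_sqrt this.le⟩
  obtain ⟨p, hp, hp2⟩ := hroot x hx
  obtain ⟨q, hq, hq2⟩ := hroot y hy
  obtain ⟨r, hr, hr2⟩ := hroot z hz
  have hk : ∀ {v w : E2} {m n : ℝ}, 0 < m → 0 < n → m ^ 2 = 1 - ‖v‖ ^ 2 →
      n ^ 2 = 1 - ‖w‖ ^ 2 → kleinCosh v w = (1 - ⟪v, w⟫) / (m * n) := fun hm hn hmv hnw => by
    rw [kleinCosh, ← hmv, ← hnw, ← mul_pow, sqrt_sq (by positivity)]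
  have hgram := lorentz_gram_det_nonneg x y z
  rw [← hp2, ← hq2, ← hr2] at hgram
  rw [hk hp hq hp2 hq2, hk hp hr hp2 hr2, hk hq hr hq2 hr2, ← sub_nonneg]
  refine (div_nonneg hgram (sq_nonneg (p * q * r))).trans_eq ?_
  field_simp
  ring

theorem le_cosh_add_of_sq_le {α β c : ℝ} (hα : 0 ≤ α) (hβ : 0 ≤ β)
    (h : (c - cosh α * cosh β) ^ 2 ≤ (cosh α ^ 2 - 1) * (cosh β ^ 2 - 1)) :
    c ≤ cosh (α + β) := by
  have hs : 0 ≤ sinh α * sinh β := mul_nonneg (sinh_nonneg_iff.2 hα) (sinh_nonneg_iff.2 hβ)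
  rw [← sinh_sq, ← sinh_sq, ← mul_pow] at h
  linarith [cosh_add α β, (abs_le_of_sq_le_sq' h hs).2]

/-- The Hilbert distance on the open unit disk is a metric: if `d` is a function which
vanishes on the diagonal and which, for distinct points `x, y` of the open unit disk,
is given by `-(1/2) log [x,y;a,b]` where `a, b` are the intersections of the line
through `x` and `y` with the unit circle, ordered so that `a, x, y, b` appear in this
order, then `d` is positive on distinct points, symmetric, and satisfies the triangle
inequality on the open disk. -/
theorem stmt_1 (d : E2 → E2 → ℝ)
    (h0 : ∀ x : E2, d x x = 0)
    (hcr : ∀ x y a b : E2, x ∈ Metric.ball (0 : E2) 1 → y ∈ Metric.ball (0 : E2) 1 →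
      x ≠ y → ‖a‖ = 1 → ‖b‖ = 1 →
      (∃ t u : ℝ, 0 < t ∧ t < u ∧ u < 1 ∧ x = a + t • (b - a) ∧ y = a + u • (b - a)) →
      d x y = -(1 / 2) * Real.log ((dist x a * dist y b) / (dist y a * dist x b))) :
    (∀ x ∈ Metric.ball (0 : E2) 1, ∀ y ∈ Metric.ball (0 : E2) 1, x ≠ y → 0 < d x y) ∧
    (∀ x ∈ Metric.ball (0 : E2) 1, ∀ y ∈ Metric.ball (0 : E2) 1, d x y = d y x) ∧
    (∀ x ∈ Metric.ball (0 : E2) 1, ∀ y ∈ Metric.ball (0 : E2) 1,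
      ∀ z ∈ Metric.ball (0 : E2) 1, d x z ≤ d x y + d y z) := by
  have hdist : ∀ x ∈ Metric.ball (0 : E2) 1, ∀ y ∈ Metric.ball (0 : E2) 1, x ≠ y →
      0 < d x y ∧ cosh (d x y) = kleinCosh x y := by
    intro x hx y hy hxy
    obtain ⟨a, b, t, u, ha, hb, ht, htu, hu, rfl, rfl⟩ :=
      exists_chord (mem_ball_zero_iff.1 hx) (mem_ball_zero_iff.1 hy) hxy
    have hab : a ≠ b := by rintro rfl; simp at hxy
    rw [hcr _ _ a b hx hy hxy ha hb ⟨t, u, ht, htu, hu, rfl, rfl⟩]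
    exact ⟨neg_half_mul_log_crossRatio_chord_pos hab ht htu hu,
      cosh_neg_half_mul_log_crossRatio_chord ha hb hab ht htu hu⟩
  have hcosh : ∀ x ∈ Metric.ball (0 : E2) 1, ∀ y ∈ Metric.ball (0 : E2) 1,
      0 ≤ d x y ∧ cosh (d x y) = kleinCosh x y := by
    intro x hx y hy
    obtain rfl | hxy := eq_or_ne x y
    · simp [h0, kleinCosh_self (mem_ball_zero_iff.1 hx)]
    · exact (hdist x hx y hy hxy).imp_left le_of_lt
  refine ⟨fun x hx y hy hxy => (hdist x hx y hy hxy).1, fun x hx y hy => ?_,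
    fun x hx y hy z hz => ?_⟩
  · obtain ⟨hxy₀, hxy⟩ := hcosh x hx y hy
    obtain ⟨hyx₀, hyx⟩ := hcosh y hy x hx
    exact cosh_injOn hxy₀ hyx₀ (by rw [hxy, hyx, kleinCosh_comm])
  · obtain ⟨hxy₀, hxy⟩ := hcosh x hx y hy
    obtain ⟨hyz₀, hyz⟩ := hcosh y hy z hz
    obtain ⟨hxz₀, hxz⟩ := hcosh x hx z hz
    refine (cosh_strictMonoOn.le_iff_le hxz₀ (add_nonneg hxy₀ hyz₀)).1 ?_
    refine le_cosh_add_of_sq_le hxy₀ hyz₀ ?_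
    rw [hxz, hxy, hyz]
    exact kleinCosh_gram (mem_ball_zero_iff.1 hx) (mem_ball_zero_iff.1 hy) (mem_ball_zero_iff.1 hz)
end

section
/- Let s be a segment in ℝ² whose endpoints x, y both lie outside the closed unit disk, but such that s intersects the open unit disk D². Then the dual lines x* and y* of x and y do not intersect inside D². -/
open scoped RealInnerProductSpace

/-- If `x, y` lie outside the closed unit disk but the segment `[x,y]` meets the open
unit disk, then the polar dual lines `x* = {p : ⟪x,p⟫ = 1}` and `y* = {p : ⟪y,p⟫ = 1}`
of `x` and `y` do not intersect inside the open disk. -/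
theorem stmt_3 (x y : E2) (hx : 1 < ‖x‖) (hy : 1 < ‖y‖)
    (hseg : ∃ t ∈ Set.Icc (0 : ℝ) 1, ‖x + t • (y - x)‖ < 1) :
    ¬ ∃ p : E2, ‖p‖ < 1 ∧ ⟪x, p⟫ = 1 ∧ ⟪y, p⟫ = 1 := by
  rintro ⟨p, hp, hxp, hyp⟩
  obtain ⟨t, ht, hz⟩ := hseg
  have h1 : ⟪x + t • (y - x), p⟫ = 1 := by
    rw [inner_add_left, real_inner_smul_left, inner_sub_left, hxp, hyp]
    ring
  have h2 := abs_real_inner_le_norm (x + t • (y - x)) p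
  rw [h1] at h2
  have hp0 : (0 : ℝ) ≤ ‖p‖ := norm_nonneg _
  have hz0 : (0 : ℝ) ≤ ‖x + t • (y - x)‖ := norm_nonneg _
  simp only [abs_one] at h2
  nlinarith
end

section
/- Space-like triangles in the de Sitter plane have total edge length strictly greater than 2π, and conversely: given l₁, l₂, l₃ ∈ (0,π) with l₁ + l₂ + l₃ > 2π, there exists a unique (up to isometry) space-like triangle in the de Sitter plane S²₁ with edge lengths l₁, l₂, l₃. -/
/-!
If `v` is a space-like triangle, the closed unit disk lies inside the projected triangle. Hence
no edge line meets the disk, which says `|⟨vᵢ, vⱼ⟩| ≤ 1`, and the time axis `(1, 0, 0)` is a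
nonnegative combination `∑ mᵢ vᵢ` of the vertices. Its Minkowski norm
`-1 = ∑ mᵢ mⱼ cos lᵢⱼ` then rules out a perimeter `≤ 2π`: for lengths in `[0, π]` with sum at
most `2π` the cosine form is nonnegative on the nonnegative octant (when the triangle
inequalities hold it is the Gram form of three unit vectors of `ℝ³`; otherwise a direct
estimate works).

Conversely, points of the quadric on the circle `x₀ = sinh t` at angular distance `θ` have
Minkowski product `cosh² t cos θ - sinh² t`. For each prescribed length this fixes `θ`, and the
intermediate value theorem gives a `t` for which the three angles add up to `2π`; each side of
the projected triangle then stays at distance `> 1` from the origin. Uniqueness: the vertices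
form a basis, and the linear map matching the vertices of two triangles with the same Gram
matrix preserves the Minkowski form.
-/

noncomputable section

/-- The Minkowski bilinear form on `ℝ³` (signature `(-,+,+)`). -/
def mink (x y : Fin 3 → ℝ) : ℝ := -(x 0 * y 0) + x 1 * y 1 + x 2 * y 2

/-- Radial projection of a point of the positive half of the de Sitter quadric to the
projective model plane `{x₀ = 1}`, identified with the Euclidean plane. -/
def dsProj (x : Fin 3 → ℝ) : EuclideanSpace ℝ (Fin 2) := WithLp.toLp 2 (fun j => x j.succ / x 0)

/-- A space-like triangle in the de Sitter plane `S²₁ = {⟨x,x⟩ = 1}`: three points of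
the quadric, in the positive hemisphere, whose radial projections to the projective
model span a Euclidean triangle bounding an open convex set containing the closed unit
disk. -/
def IsSpacelikeTriangle (v : Fin 3 → Fin 3 → ℝ) : Prop :=
  (∀ i, mink (v i) (v i) = 1 ∧ 0 < v i 0) ∧
  Metric.closedBall (0 : EuclideanSpace ℝ (Fin 2)) 1 ⊆
    interior (convexHull ℝ (Set.range fun i => dsProj (v i)))

/-- The length of the space-like geodesic edge joining two points of the de Sitter
plane. -/
def sLen (x y : Fin 3 → ℝ) : ℝ := Real.arccos (mink x y)

open Matrix Set Real

lemma quadratic_nonneg_of_sq_le {α β γ : ℝ} (hα : 0 ≤ α) (hγ : 0 ≤ γ) (h : β ^ 2 ≤ α * γ)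
    (y z : ℝ) : 0 ≤ α * y ^ 2 + 2 * β * y * z + γ * z ^ 2 := by
  rcases hα.eq_or_lt with rfl | hα
  · have hβ : β = 0 := by nlinarith
    subst hβ; nlinarith [sq_nonneg z]
  · refine nonneg_of_mul_nonneg_right ?_ hα
    linear_combination sq_nonneg (α * y + β * z) + z ^ 2 * (sub_nonneg.2 h)

lemma triple_product_smul_eq {R : Type*} [CommRing R] (u v w x : Fin 3 → R) :
    (u ⬝ᵥ v ⨯₃ w) • x = (x ⬝ᵥ v ⨯₃ w) • u + (x ⬝ᵥ w ⨯₃ u) • v + (x ⬝ᵥ u ⨯₃ v) • w := by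
  ext i
  fin_cases i <;>
    simp only [dotProduct, cross_apply, Fin.sum_univ_three, cons_val_zero, cons_val_one, cons_val,
      Fin.isValue, Fin.zero_eta, Fin.mk_one, Fin.reduceFinMk, Pi.smul_apply, smul_eq_mul,
      Pi.add_apply] <;>
    ring

lemma det_of_eq_triple_product (v : Fin 3 → Fin 3 → ℝ) :
    (Matrix.of v).det = v 0 ⬝ᵥ v 1 ⨯₃ v 2 := by
  rw [triple_product_eq_det]; congr 1; ext i : 1; fin_cases i <;> rfl

theorem LinearMap.BilinForm.exists_isometry_of_gram_eq {R M ι : Type*} [CommSemiring R]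
    [AddCommMonoid M] [Module R M] (B : LinearMap.BilinForm R M) (b : Module.Basis ι R M)
    (w : ι → M) (h : ∀ i j, B (w i) (w j) = B (b i) (b j)) :
    ∃ g : M →ₗ[R] M, (∀ x y, B (g x) (g y) = B x y) ∧ ∀ i, g (b i) = w i := by
  refine ⟨b.constr R w, fun x y => ?_, fun i => b.constr_basis R w i⟩
  have := LinearMap.BilinForm.ext_basis b (B := B.compl₁₂ (b.constr R w) (b.constr R w))
    (F₂ := B) (by simpa using h)
  exact LinearMap.congr_fun₂ this x y

lemma interior_convexHull_subset_of_inner_le {E : Type*} [NormedAddCommGroup E]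
    [InnerProductSpace ℝ E] [CompleteSpace E] {n : E} (hn : n ≠ 0) {s : Set E} {c : ℝ}
    (hs : ∀ x ∈ s, inner ℝ n x ≤ c) : interior (convexHull ℝ s) ⊆ {x | inner ℝ n x < c} := by
  have hsurj : Function.Surjective (innerSL ℝ n) := fun r =>
    ⟨(r / ‖n‖ ^ 2) • n, by simp [norm_ne_zero_iff.2 hn]⟩
  have hhull : convexHull ℝ s ⊆ innerSL ℝ n ⁻¹' Iic c :=
    convexHull_min hs ((convex_Iic c).linear_preimage (innerSL ℝ n).toLinearMap)
  calc interior (convexHull ℝ s) ⊆ interior (innerSL ℝ n ⁻¹' Iic c) := interior_mono hhull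
    _ = innerSL ℝ n ⁻¹' Iio c := by
        rw [(innerSL ℝ n).interior_preimage hsurj, interior_Iic]
    _ = {x | inner ℝ n x < c} := rfl

lemma mink_comm (x y : Fin 3 → ℝ) : mink x y = mink y x := by
  unfold mink; ring

lemma mink_smul_add_smul_add_smul (a b c : ℝ) (x y z : Fin 3 → ℝ) :
    mink (a • x + b • y + c • z) (a • x + b • y + c • z) =
      a ^ 2 * mink x x + b ^ 2 * mink y y + c ^ 2 * mink z z + 2 * a * b * mink x y +
        2 * b * c * mink y z + 2 * a * c * mink x z := by
  simp only [mink, Pi.add_apply, Pi.smul_apply, smul_eq_mul]; ring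

lemma mink_cross_self (u w : Fin 3 → ℝ) :
    mink (u ⨯₃ w) (u ⨯₃ w) = mink u w ^ 2 - mink u u * mink w w := by
  simp only [mink, cross_apply, cons_val_zero, cons_val_one, cons_val]
  ring

lemma ne_zero_of_mink_self_neg {u : Fin 3 → ℝ} (hu : mink u u < 0) : u 0 ≠ 0 := by
  intro h; simp only [mink, h] at hu; nlinarith

def minkForm : LinearMap.BilinForm ℝ (Fin 3 → ℝ) :=
  LinearMap.mk₂ ℝ mink (fun _ _ _ => by simp only [mink, Pi.add_apply]; ring)
    (fun _ _ _ => by simp only [mink, Pi.smul_apply, smul_eq_mul]; ring)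
    (fun _ _ _ => by simp only [mink, Pi.add_apply]; ring)
    (fun _ _ _ => by simp only [mink, Pi.smul_apply, smul_eq_mul]; ring)

def IsFutureTimelike (n : Fin 3 → ℝ) : Prop := mink n n < 0 ∧ 0 < n 0

def dsLift (z : EuclideanSpace ℝ (Fin 2)) : Fin 3 → ℝ := ![1, z 0, z 1]

lemma dsLift_dotProduct (z : EuclideanSpace ℝ (Fin 2)) (a : Fin 3 → ℝ) :
    dsLift z ⬝ᵥ a = a 0 + z 0 * a 1 + z 1 * a 2 := by
  simp [dsLift, dotProduct, Fin.sum_univ_three]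

lemma dsLift_zero : dsLift 0 = ![1, 0, 0] := by
  ext i; fin_cases i <;> simp [dsLift]

lemma smul_dsLift_dsProj {x : Fin 3 → ℝ} (hx : x 0 ≠ 0) : x 0 • dsLift (dsProj x) = x := by
  ext i
  fin_cases i <;>
    simp only [dsLift, dsProj, cons_val_zero, cons_val_one, cons_val, Fin.isValue, Fin.zero_eta,
      Fin.mk_one, Fin.reduceFinMk, Fin.succ_zero_eq_one, Fin.succ_one_eq_two, Pi.smul_apply,
      smul_eq_mul, mul_one] <;>
    field_simp

lemma norm_dsProj_le_one {u : Fin 3 → ℝ} (hu : mink u u < 0) : ‖dsProj u‖ ≤ 1 := by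
  have hu0 := ne_zero_of_mink_self_neg hu
  rw [← sq_le_one_iff₀ (norm_nonneg _), EuclideanSpace.real_norm_sq_eq, Fin.sum_univ_two]
  simp only [dsProj, mink, Fin.succ_zero_eq_one, Fin.succ_one_eq_two] at hu ⊢
  rw [div_pow, div_pow, ← add_div, div_le_one (by positivity)]
  nlinarith

lemma dsLift_dotProduct_pos {n : Fin 3 → ℝ} (hn : IsFutureTimelike n)
    {x : EuclideanSpace ℝ (Fin 2)} (hx : ‖x‖ ≤ 1) : 0 < dsLift x ⬝ᵥ n := by
  obtain ⟨hn, hn0⟩ := hn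
  have hx2 : x 0 ^ 2 + x 1 ^ 2 ≤ 1 := by
    rw [← Fin.sum_univ_two (f := fun i => x i ^ 2), ← EuclideanSpace.real_norm_sq_eq]
    exact pow_le_one₀ (norm_nonneg x) hx
  simp only [mink] at hn
  rw [dsLift_dotProduct]
  by_contra! hneg
  nlinarith [sq_nonneg (x 0 * n 2 - x 1 * n 1), sq_nonneg (n 1), sq_nonneg (n 2)]

def dsHull (v : Fin 3 → Fin 3 → ℝ) : Set (EuclideanSpace ℝ (Fin 2)) :=
  convexHull ℝ (range fun i => dsProj (v i))

lemma dsHull_rotate (v : Fin 3 → Fin 3 → ℝ) : dsHull ![v 1, v 2, v 0] = dsHull v := by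
  have h : ![v 1, v 2, v 0] = v ∘ finRotate 3 := by
    ext i : 1; fin_cases i <;> rfl
  simp only [dsHull, h, Function.comp_apply]
  exact congrArg _ ((finRotate 3).surjective.range_comp fun i => dsProj (v i))

lemma dsLift_dotProduct_neg_of_mem_interior {v : Fin 3 → Fin 3 → ℝ} (hv : ∀ i, 0 < v i 0)
    {a : Fin 3 → ℝ} (ha : a ≠ 0) (hle : ∀ i, v i ⬝ᵥ a ≤ 0) {z : EuclideanSpace ℝ (Fin 2)}
    (hz : z ∈ interior (dsHull v)) : dsLift z ⬝ᵥ a < 0 := by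
  have hproj : ∀ i, dsLift (dsProj (v i)) ⬝ᵥ a ≤ 0 := fun i => by
    have h := hle i
    rw [← smul_dsLift_dsProj (hv i).ne', smul_dotProduct, smul_eq_mul] at h
    exact nonpos_of_mul_nonpos_right h (hv i)
  by_cases h12 : a 1 = 0 ∧ a 2 = 0
  · have ha0 : a 0 ≠ 0 := fun h0 => ha (by ext i; fin_cases i <;> simp [h0, h12])
    have := hproj 0
    simp only [dsLift_dotProduct, h12, mul_zero, add_zero] at this ⊢
    exact lt_of_le_of_ne this ha0
  · set n : EuclideanSpace ℝ (Fin 2) := !₂[a 1, a 2]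
    have hn : n ≠ 0 := fun h => h12 ⟨by simpa [n] using congrArg (· 0) h,
      by simpa [n] using congrArg (· 1) h⟩
    have hinner : ∀ x : EuclideanSpace ℝ (Fin 2), inner ℝ n x = dsLift x ⬝ᵥ a - a 0 := by
      intro x; simp only [n, dsLift_dotProduct, PiLp.inner_apply, RCLike.inner_apply, ringHom_apply,
        Fin.sum_univ_two, cons_val_zero, cons_val_one]
      ring
    have key := interior_convexHull_subset_of_inner_le hn (c := -a 0)
      (s := range fun i => dsProj (v i)) (by rintro _ ⟨i, rfl⟩; rw [hinner]; linarith [hproj i]) hz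
    rw [mem_ofPred_eq, hinner] at key
    linarith

/-- `{z | dsLift z ⬝ᵥ v 0 ⨯₃ v 1 = 0}` is the line through the first two projected vertices, and
the third vertex lies on the side where this functional has the sign of the determinant. If the
determinant vanishes, the projected vertices are collinear and the interior is empty. -/
lemma det_mul_dotProduct_cross_pos {v : Fin 3 → Fin 3 → ℝ} (hv : ∀ i, 0 < v i 0)
    {z : EuclideanSpace ℝ (Fin 2)} (hz : z ∈ interior (dsHull v)) :
    0 < (v 0 ⬝ᵥ v 1 ⨯₃ v 2) * (dsLift z ⬝ᵥ v 0 ⨯₃ v 1) := by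
  by_cases hD : v 0 ⬝ᵥ v 1 ⨯₃ v 2 = 0
  · exfalso
    have hdet : (Matrix.of v).det = 0 := (det_of_eq_triple_product v).trans hD
    obtain ⟨a, ha, hva⟩ := Matrix.exists_mulVec_eq_zero_iff.2 hdet
    have hva' : ∀ i, v i ⬝ᵥ a = 0 := fun i => congrFun hva i
    have hneg : ∀ i, v i ⬝ᵥ -a = 0 := fun i => by rw [dotProduct_neg, hva' i, neg_zero]
    have h1 := dsLift_dotProduct_neg_of_mem_interior hv ha (fun i => (hva' i).le) hz
    have h2 := dsLift_dotProduct_neg_of_mem_interior hv (neg_ne_zero.2 ha)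
      (fun i => (hneg i).le) hz
    rw [dotProduct_neg] at h2
    linarith
  · set D := v 0 ⬝ᵥ v 1 ⨯₃ v 2
    have hv2 : v 2 ⬝ᵥ v 0 ⨯₃ v 1 = D := (triple_product_permutation _ _ _).symm.trans
      (triple_product_permutation _ _ _).symm
    have h2 : v 2 ⬝ᵥ (-D) • v 0 ⨯₃ v 1 = -(D * D) := by
      rw [dotProduct_smul, hv2, smul_eq_mul]; ring
    have hle : ∀ i, v i ⬝ᵥ (-D) • v 0 ⨯₃ v 1 ≤ 0 := by
      intro i; fin_cases i
      · simp [dot_self_cross]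
      · simp [dot_cross_self]
      · simp only [Fin.reduceFinMk, Fin.isValue, h2]; nlinarith [mul_self_nonneg D]
    have ha : (-D) • v 0 ⨯₃ v 1 ≠ 0 := by
      intro h
      rw [h, dotProduct_zero, zero_eq_neg] at h2
      exact hD (mul_self_eq_zero.1 h2)
    have := dsLift_dotProduct_neg_of_mem_interior hv ha hle hz
    rw [dotProduct_smul, smul_eq_mul] at this
    nlinarith

/-- By Cramer's rule the barycentric coordinates of `x` are `(dsLift x ⬝ᵥ v 1 ⨯₃ v 2) * v 0 0 / D`
and its cyclic shifts, with `D = v 0 ⬝ᵥ v 1 ⨯₃ v 2`. -/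
lemma mem_dsHull_of_dotProduct_cross_pos {v : Fin 3 → Fin 3 → ℝ} (hv : ∀ i, 0 < v i 0)
    {x : EuclideanSpace ℝ (Fin 2)} (h0 : 0 < dsLift x ⬝ᵥ v 1 ⨯₃ v 2)
    (h1 : 0 < dsLift x ⬝ᵥ v 2 ⨯₃ v 0) (h2 : 0 < dsLift x ⬝ᵥ v 0 ⨯₃ v 1) : x ∈ dsHull v := by
  have hc := fun j => congrFun (triple_product_smul_eq (v 0) (v 1) (v 2) (dsLift x)) j
  simp only [Pi.add_apply, Pi.smul_apply, smul_eq_mul] at hc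
  generalize v 0 ⬝ᵥ v 1 ⨯₃ v 2 = D at hc
  generalize dsLift x ⬝ᵥ v 1 ⨯₃ v 2 = a₀ at h0 hc
  generalize dsLift x ⬝ᵥ v 2 ⨯₃ v 0 = a₁ at h1 hc
  generalize dsLift x ⬝ᵥ v 0 ⨯₃ v 1 = a₂ at h2 hc
  have hx0 := hc 0
  have hx1 := hc 1
  have hx2 := hc 2
  simp only [dsLift, Matrix.cons_val_zero, Matrix.cons_val_one, Matrix.cons_val_two,
    Matrix.head_cons, Matrix.tail_cons, mul_one] at hx0 hx1 hx2
  have := hv 0; have := hv 1; have := hv 2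
  have hD : 0 < D := by rw [hx0]; positivity
  have hmem := (convex_convexHull ℝ (range fun i => dsProj (v i))).sum_mem (t := Finset.univ)
    (w := ![a₀ * v 0 0 / D, a₁ * v 1 0 / D, a₂ * v 2 0 / D]) (z := fun i => dsProj (v i))
    (fun i _ => by
      fin_cases i <;>
        simp only [cons_val_zero, cons_val_one, cons_val, Fin.isValue, Fin.zero_eta, Fin.mk_one,
          Fin.reduceFinMk] <;>
        positivity)
    (by simp only [Fin.sum_univ_three, cons_val_zero, cons_val_one, cons_val]; field_simp; linarith)
    (fun i _ => subset_convexHull ℝ _ (mem_range_self i))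
  refine (congrArg (· ∈ dsHull v) ?_).mp hmem
  refine PiLp.ext fun j => ?_
  fin_cases j <;>
    simp only [dsProj, Fin.sum_univ_three, cons_val_zero, cons_val_one, cons_val, Fin.isValue,
      Fin.zero_eta, Fin.mk_one, PiLp.add_apply, PiLp.smul_apply, Fin.succ_zero_eq_one,
      Fin.succ_one_eq_two, smul_eq_mul] <;>
    field_simp <;> linarith

lemma closedBall_subset_interior_dsHull {v : Fin 3 → Fin 3 → ℝ} (hv : ∀ i, 0 < v i 0)
    (h₀ : IsFutureTimelike (v 1 ⨯₃ v 2)) (h₁ : IsFutureTimelike (v 2 ⨯₃ v 0))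
    (h₂ : IsFutureTimelike (v 0 ⨯₃ v 1)) : Metric.closedBall 0 1 ⊆ interior (dsHull v) := by
  set U := {x : EuclideanSpace ℝ (Fin 2) | 0 < dsLift x ⬝ᵥ v 1 ⨯₃ v 2 ∧
    0 < dsLift x ⬝ᵥ v 2 ⨯₃ v 0 ∧ 0 < dsLift x ⬝ᵥ v 0 ⨯₃ v 1}
  have hcont : ∀ n, Continuous fun x : EuclideanSpace ℝ (Fin 2) => dsLift x ⬝ᵥ n := fun n => by
    simp only [dsLift_dotProduct]; fun_prop
  have hU : IsOpen U := (isOpen_lt continuous_const (hcont _)).inter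
    ((isOpen_lt continuous_const (hcont _)).inter (isOpen_lt continuous_const (hcont _)))
  intro x hx
  rw [mem_closedBall_zero_iff] at hx
  exact interior_maximal (fun y hy => mem_dsHull_of_dotProduct_cross_pos hv hy.1 hy.2.1 hy.2.2) hU
    ⟨dsLift_dotProduct_pos h₀ hx, dsLift_dotProduct_pos h₁ hx, dsLift_dotProduct_pos h₂ hx⟩

lemma IsSpacelikeTriangle.zero_mem_interior {v : Fin 3 → Fin 3 → ℝ} (h : IsSpacelikeTriangle v) :
    0 ∈ interior (dsHull v) :=
  h.2 (Metric.mem_closedBall_self zero_le_one)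

lemma IsSpacelikeTriangle.rotate {v : Fin 3 → Fin 3 → ℝ} (h : IsSpacelikeTriangle v) :
    IsSpacelikeTriangle ![v 1, v 2, v 0] := by
  refine ⟨fun i => by fin_cases i <;> exact h.1 _, ?_⟩
  change _ ⊆ interior (dsHull _)
  rw [dsHull_rotate]
  exact h.2

/-- If `|c| > 1` for `c = ⟨v 0, v 1⟩`, then `v 0 - c • v 1` is timelike, so it projects to a point
of the unit disk on the line through the first two projected vertices. -/
lemma IsSpacelikeTriangle.abs_mink_zero_one_le_one {v : Fin 3 → Fin 3 → ℝ}
    (h : IsSpacelikeTriangle v) : |mink (v 0) (v 1)| ≤ 1 := by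
  by_contra! hc
  rw [← one_lt_sq_iff_one_lt_abs] at hc
  set c := mink (v 0) (v 1) with hc_def
  set u := v 0 - c • v 1
  have hu : mink u u < 0 := by
    have h0 := (h.1 0).1
    have h1 := (h.1 1).1
    have hexp : mink u u = 1 - c ^ 2 := by
      simp only [u, mink, Pi.sub_apply, Pi.smul_apply, smul_eq_mul] at h0 h1 hc_def ⊢
      linear_combination h0 + c ^ 2 * h1 + 2 * c * hc_def
    linarith
  have hu0 := ne_zero_of_mink_self_neg hu
  have hpos := det_mul_dotProduct_cross_pos (fun i => (h.1 i).2)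
    (h.2 (mem_closedBall_zero_iff.2 (norm_dsProj_le_one hu)))
  have hcross : u ⬝ᵥ v 0 ⨯₃ v 1 = 0 := by
    simp [u, sub_dotProduct, dot_self_cross, dot_cross_self]
  rw [← smul_dsLift_dsProj hu0, smul_dotProduct, smul_eq_mul, mul_eq_zero] at hcross
  rcases hcross with h0 | h0
  · exact hu0 h0
  · rw [h0, mul_zero] at hpos; exact lt_irrefl _ hpos

lemma IsSpacelikeTriangle.abs_mink_le_one {v : Fin 3 → Fin 3 → ℝ} (h : IsSpacelikeTriangle v)
    (i j : Fin 3) : |mink (v i) (v j)| ≤ 1 := by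
  have h01 := h.abs_mink_zero_one_le_one
  have h12 := h.rotate.abs_mink_zero_one_le_one
  have h20 := h.rotate.rotate.abs_mink_zero_one_le_one
  simp only [Matrix.cons_val_zero, Matrix.cons_val_one, Matrix.cons_val_two, Matrix.head_cons,
    Matrix.tail_cons] at h12 h20
  fin_cases i <;> fin_cases j <;> first | assumption | rwa [mink_comm] | simp [(h.1 _).1]

lemma IsSpacelikeTriangle.exists_nonneg_combination {v : Fin 3 → Fin 3 → ℝ}
    (h : IsSpacelikeTriangle v) :
    ∃ m : Fin 3 → ℝ, (∀ i, 0 ≤ m i) ∧ m 0 • v 0 + m 1 • v 1 + m 2 • v 2 = ![1, 0, 0] := by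
  have h2 := det_mul_dotProduct_cross_pos (fun i => (h.1 i).2) h.zero_mem_interior
  have h0 := det_mul_dotProduct_cross_pos (fun i => (h.rotate.1 i).2) h.rotate.zero_mem_interior
  have h1 := det_mul_dotProduct_cross_pos (fun i => (h.rotate.rotate.1 i).2)
    h.rotate.rotate.zero_mem_interior
  simp only [Matrix.cons_val_zero, Matrix.cons_val_one, Matrix.cons_val_two, Matrix.head_cons,
    Matrix.tail_cons] at h0 h1
  rw [← triple_product_permutation] at h0
  rw [← triple_product_permutation, ← triple_product_permutation] at h1
  rw [dsLift_zero] at h0 h1 h2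
  set D := v 0 ⬝ᵥ v 1 ⨯₃ v 2
  have hD : D ≠ 0 := left_ne_zero_of_mul h2.ne'
  have hdiv : ∀ {t : ℝ}, 0 < D * t → 0 ≤ t / D := fun {t} ht => by
    rw [show t / D = D * t / D ^ 2 by field_simp]; positivity
  have hcramer := triple_product_smul_eq (v 0) (v 1) (v 2) ![1, 0, 0]
  refine ⟨![(![1, 0, 0] ⬝ᵥ v 1 ⨯₃ v 2) / D, (![1, 0, 0] ⬝ᵥ v 2 ⨯₃ v 0) / D,
    (![1, 0, 0] ⬝ᵥ v 0 ⨯₃ v 1) / D], fun i => ?_, ?_⟩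
  · fin_cases i
    exacts [hdiv h0, hdiv h1, hdiv h2]
  · simp only [Matrix.cons_val_zero, Matrix.cons_val_one, Matrix.cons_val_two, Matrix.head_cons,
      Matrix.tail_cons, div_eq_inv_mul, mul_smul]
    rw [← smul_add, ← smul_add, ← hcramer, smul_smul, inv_mul_cancel₀ hD, one_smul]

lemma IsSpacelikeTriangle.linearIndependent {v : Fin 3 → Fin 3 → ℝ} (h : IsSpacelikeTriangle v) :
    LinearIndependent ℝ v := by
  have hD := left_ne_zero_of_mul
    (det_mul_dotProduct_cross_pos (fun i => (h.1 i).2) h.zero_mem_interior).ne'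
  rw [← det_of_eq_triple_product] at hD
  exact Matrix.linearIndependent_rows_of_det_ne_zero hD

lemma sLen_mem_Icc (x y : Fin 3 → ℝ) : sLen x y ∈ Icc 0 π :=
  ⟨arccos_nonneg _, arccos_le_pi _⟩

lemma cos_sLen {x y : Fin 3 → ℝ} (h : |mink x y| ≤ 1) : cos (sLen x y) = mink x y :=
  cos_arccos (abs_le.1 h).1 (abs_le.1 h).2

lemma cos_sub_mul_cos_sq_le {a b c : ℝ} (ha : a ∈ Icc 0 π) (hb : b ∈ Icc 0 π) (hc : c ∈ Icc 0 π)
    (hac : a ≤ b + c) (hca : c ≤ a + b) (hb_le : b ≤ a + c) (hsum : a + b + c ≤ 2 * π) :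
    (cos b - cos a * cos c) ^ 2 ≤ sin a ^ 2 * sin c ^ 2 := by
  have hsa := sin_nonneg_of_nonneg_of_le_pi ha.1 ha.2
  have hsc := sin_nonneg_of_nonneg_of_le_pi hc.1 hc.2
  have hupper : cos b ≤ cos (a - c) := by
    rw [← cos_abs (a - c)]
    exact cos_le_cos_of_nonneg_of_le_pi (abs_nonneg _) hb.2
      (abs_sub_le_iff.2 ⟨by linarith, by linarith⟩)
  have hlower : cos (a + c) ≤ cos b := by
    rcases le_total (a + c) π with h | h
    · exact cos_le_cos_of_nonneg_of_le_pi hb.1 h hb_le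
    · rw [← cos_two_pi_sub]
      exact cos_le_cos_of_nonneg_of_le_pi hb.1 (by linarith) (by linarith)
  rw [cos_sub] at hupper
  rw [cos_add] at hlower
  rw [← mul_pow]
  exact sq_le_sq' (by linarith) (by linarith)

/-- Completing the square in `x` leaves a binary form in `y, z` whose discriminant condition is
`cos (a + c) ≤ cos b ≤ cos (a - c)`. -/
lemma cos_quadratic_nonneg_of_triangle {a b c : ℝ} (ha : a ∈ Icc 0 π) (hb : b ∈ Icc 0 π)
    (hc : c ∈ Icc 0 π) (hac : a ≤ b + c) (hca : c ≤ a + b) (hb_le : b ≤ a + c)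
    (hsum : a + b + c ≤ 2 * π) (x y z : ℝ) :
    0 ≤ x ^ 2 + y ^ 2 + z ^ 2 + 2 * x * y * cos a + 2 * y * z * cos b + 2 * x * z * cos c := by
  have hform := quadratic_nonneg_of_sq_le (sq_nonneg (sin a)) (sq_nonneg (sin c))
    (cos_sub_mul_cos_sq_le ha hb hc hac hca hb_le hsum) y z
  linear_combination sq_nonneg (x + y * cos a + z * cos c) + hform
    + y ^ 2 * sin_sq_add_cos_sq a + z ^ 2 * sin_sq_add_cos_sq c

lemma cos_quadratic_nonneg_of_add_lt {a b c : ℝ} (ha : a ≤ π) (hb : 0 ≤ b) (hc : 0 ≤ c)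
    (h : b + c < a) {x y z : ℝ} (hx : 0 ≤ x) (hy : 0 ≤ y) (hz : 0 ≤ z) :
    0 ≤ x ^ 2 + y ^ 2 + z ^ 2 + 2 * x * y * cos a + 2 * y * z * cos b + 2 * x * z * cos c := by
  have hbc : 0 ≤ cos b + cos c := by
    have := cos_le_cos_of_nonneg_of_le_pi hb (by linarith : π - c ≤ π) (by linarith : b ≤ π - c)
    rw [cos_pi_sub] at this
    linarith
  have ha1 := neg_one_le_cos a
  have hb1 := cos_le_one b
  have hc1 := cos_le_one c
  rcases le_total y x with hxy | hxy
  · nlinarith [sq_nonneg (x - y - z), mul_nonneg (mul_nonneg (by linarith : 0 ≤ 1 + cos a) hx) hy,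
      mul_nonneg (mul_nonneg hz (sub_nonneg.2 hxy)) (sub_nonneg.2 hb1),
      mul_nonneg (mul_nonneg hz hx) hbc]
  · nlinarith [sq_nonneg (y - x - z), mul_nonneg (mul_nonneg (by linarith : 0 ≤ 1 + cos a) hx) hy,
      mul_nonneg (mul_nonneg hz (sub_nonneg.2 hxy)) (sub_nonneg.2 hc1),
      mul_nonneg (mul_nonneg hz hy) hbc]

lemma cos_quadratic_nonneg {a b c : ℝ} (ha : a ∈ Icc 0 π) (hb : b ∈ Icc 0 π) (hc : c ∈ Icc 0 π)
    (hsum : a + b + c ≤ 2 * π) {x y z : ℝ} (hx : 0 ≤ x) (hy : 0 ≤ y) (hz : 0 ≤ z) :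
    0 ≤ x ^ 2 + y ^ 2 + z ^ 2 + 2 * x * y * cos a + 2 * y * z * cos b + 2 * x * z * cos c := by
  rcases lt_or_ge (b + c) a with h | hac
  · exact cos_quadratic_nonneg_of_add_lt ha.2 hb.1 hc.1 h hx hy hz
  rcases lt_or_ge (c + a) b with h | hb_le
  · linear_combination cos_quadratic_nonneg_of_add_lt hb.2 hc.1 ha.1 h hy hz hx
  rcases lt_or_ge (a + b) c with h | hca
  · linear_combination cos_quadratic_nonneg_of_add_lt hc.2 ha.1 hb.1 h hz hx hy
  exact cos_quadratic_nonneg_of_triangle ha hb hc hac hca (by linarith) hsum x y z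

lemma IsSpacelikeTriangle.two_pi_lt_perimeter {v : Fin 3 → Fin 3 → ℝ}
    (h : IsSpacelikeTriangle v) :
    2 * π < sLen (v 0) (v 1) + sLen (v 1) (v 2) + sLen (v 0) (v 2) := by
  obtain ⟨m, hm, hsum⟩ := h.exists_nonneg_combination
  by_contra! hle
  have hQ := cos_quadratic_nonneg (sLen_mem_Icc _ _) (sLen_mem_Icc _ _) (sLen_mem_Icc _ _) hle
    (hm 0) (hm 1) (hm 2)
  rw [cos_sLen (h.abs_mink_le_one 0 1), cos_sLen (h.abs_mink_le_one 1 2),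
    cos_sLen (h.abs_mink_le_one 0 2)] at hQ
  have htime :
      mink (m 0 • v 0 + m 1 • v 1 + m 2 • v 2) (m 0 • v 0 + m 1 • v 1 + m 2 • v 2) = -1 := by
    rw [hsum]; simp [mink]
  rw [mink_smul_add_smul_add_smul, (h.1 0).1, (h.1 1).1, (h.1 2).1] at htime
  linarith

lemma IsSpacelikeTriangle.mink_eq_of_sLen_eq {v w : Fin 3 → Fin 3 → ℝ}
    (hv : IsSpacelikeTriangle v) (hw : IsSpacelikeTriangle w)
    (h01 : sLen (v 0) (v 1) = sLen (w 0) (w 1)) (h12 : sLen (v 1) (v 2) = sLen (w 1) (w 2))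
    (h02 : sLen (v 0) (v 2) = sLen (w 0) (w 2)) (i j : Fin 3) :
    mink (v i) (v j) = mink (w i) (w j) := by
  have key : ∀ i j, sLen (v i) (v j) = sLen (w i) (w j) → mink (v i) (v j) = mink (w i) (w j) :=
    fun i j e => by rw [← cos_sLen (hv.abs_mink_le_one i j), e, cos_sLen (hw.abs_mink_le_one i j)]
  fin_cases i <;> fin_cases j <;>
    first
    | exact key _ _ ‹_›
    | (rw [mink_comm, mink_comm (w _)]; exact key _ _ ‹_›)
    | simp [(hv.1 _).1, (hw.1 _).1]

lemma IsSpacelikeTriangle.exists_isometry_of_sLen_eq {v w : Fin 3 → Fin 3 → ℝ}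
    (hv : IsSpacelikeTriangle v) (hw : IsSpacelikeTriangle w)
    (h01 : sLen (v 0) (v 1) = sLen (w 0) (w 1)) (h12 : sLen (v 1) (v 2) = sLen (w 1) (w 2))
    (h02 : sLen (v 0) (v 2) = sLen (w 0) (w 2)) :
    ∃ g : (Fin 3 → ℝ) →ₗ[ℝ] (Fin 3 → ℝ),
      (∀ x y, mink (g x) (g y) = mink x y) ∧ ∀ i, g (v i) = w i := by
  obtain ⟨g, hg, hgv⟩ := minkForm.exists_isometry_of_gram_eq
    (basisOfLinearIndependentOfCardEqFinrank hv.linearIndependent (by simp)) w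
    (by simpa [minkForm] using fun i j => (hv.mink_eq_of_sLen_eq hw h01 h12 h02 i j).symm)
  exact ⟨g, by simpa [minkForm] using hg, by simpa using hgv⟩

def dsPoint (t φ : ℝ) : Fin 3 → ℝ := ![sinh t, cosh t * cos φ, cosh t * sin φ]

lemma mink_dsPoint (t φ ψ : ℝ) :
    mink (dsPoint t φ) (dsPoint t ψ) = cosh t ^ 2 * cos (ψ - φ) - sinh t ^ 2 := by
  simp only [mink, dsPoint, cons_val_zero, cons_val_one, cons_val, cos_sub]; ring

lemma mink_dsPoint_self (t φ : ℝ) : mink (dsPoint t φ) (dsPoint t φ) = 1 := by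
  rw [mink_dsPoint, sub_self, cos_zero, mul_one, cosh_sq]; ring

lemma cross_dsPoint_zero (t φ ψ : ℝ) :
    (dsPoint t φ ⨯₃ dsPoint t ψ) 0 = cosh t ^ 2 * sin (ψ - φ) := by
  simp only [dsPoint, cross_apply, cons_val_zero, cons_val_one, cons_val, sin_sub]; ring

lemma isFutureTimelike_cross_dsPoint {t φ ψ : ℝ} (hm : |mink (dsPoint t φ) (dsPoint t ψ)| < 1)
    (hs : 0 < sin (ψ - φ)) : IsFutureTimelike (dsPoint t φ ⨯₃ dsPoint t ψ) := by
  rw [IsFutureTimelike, mink_cross_self, mink_dsPoint_self, mink_dsPoint_self, cross_dsPoint_zero]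
  refine ⟨?_, by positivity⟩
  have := (sq_lt_one_iff_abs_lt_one _).2 hm
  linarith

def centralAngle (t c : ℝ) : ℝ := arccos ((c + sinh t ^ 2) / cosh t ^ 2)

lemma centralAngle_arg_mem {c : ℝ} (hc : c ∈ Ioo (-1) 1) (t : ℝ) :
    (c + sinh t ^ 2) / cosh t ^ 2 ∈ Ioo (-1) 1 := by
  have hcosh : cosh t ^ 2 = sinh t ^ 2 + 1 := cosh_sq t
  have hpos : 0 < cosh t ^ 2 := by positivity
  rw [mem_Ioo, lt_div_iff₀ hpos, div_lt_one hpos, hcosh]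
  constructor <;> nlinarith [hc.1, hc.2, sq_nonneg (sinh t)]

lemma centralAngle_mem_Ioo {c : ℝ} (hc : c ∈ Ioo (-1) 1) (t : ℝ) : centralAngle t c ∈ Ioo 0 π :=
  ⟨arccos_pos.2 (centralAngle_arg_mem hc t).2, arccos_lt_pi.2 (centralAngle_arg_mem hc t).1⟩

lemma cosh_sq_mul_cos_centralAngle {c : ℝ} (hc : c ∈ Ioo (-1) 1) (t : ℝ) :
    cosh t ^ 2 * cos (centralAngle t c) - sinh t ^ 2 = c := by
  have h := centralAngle_arg_mem hc t
  rw [centralAngle, cos_arccos h.1.le h.2.le, mul_div_cancel₀ _ (by positivity)]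
  ring

lemma centralAngle_zero {c : ℝ} : centralAngle 0 c = arccos c := by
  simp [centralAngle]

lemma centralAngle_arsinh_one_le {c : ℝ} (hc : -1 ≤ c) : centralAngle (arsinh 1) c ≤ π / 2 := by
  rw [centralAngle, arccos_le_pi_div_two, cosh_sq, sinh_arsinh]
  apply div_nonneg <;> linarith

lemma continuous_centralAngle (c : ℝ) : Continuous fun t => centralAngle t c :=
  continuous_arccos.comp <| (continuous_const.add (continuous_sinh.pow 2)).div
    (continuous_cosh.pow 2) fun t => by positivity

lemma exists_centralAngle_sum_eq_two_pi {c₁ c₂ c₃ : ℝ} (h₁ : c₁ ∈ Ioo (-1) 1)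
    (h₂ : c₂ ∈ Ioo (-1) 1) (h₃ : c₃ ∈ Ioo (-1) 1)
    (hsum : 2 * π < arccos c₁ + arccos c₂ + arccos c₃) :
    ∃ t, 0 < t ∧ centralAngle t c₁ + centralAngle t c₂ + centralAngle t c₃ = 2 * π := by
  set F := fun t => centralAngle t c₁ + centralAngle t c₂ + centralAngle t c₃
  have hF : Continuous F := ((continuous_centralAngle c₁).add
    (continuous_centralAngle c₂)).add (continuous_centralAngle c₃)
  have hF0 : F 0 = arccos c₁ + arccos c₂ + arccos c₃ := by simp [F, centralAngle_zero]
  have hF1 : F (arsinh 1) ≤ 2 * π := by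
    linarith [centralAngle_arsinh_one_le h₁.1.le, centralAngle_arsinh_one_le h₂.1.le,
      centralAngle_arsinh_one_le h₃.1.le, pi_pos]
  obtain ⟨t, ht, hFt⟩ := intermediate_value_Icc' (arsinh_nonneg_iff.2 zero_le_one)
    hF.continuousOn ⟨hF1, by linarith⟩
  refine ⟨t, lt_of_le_of_ne ht.1 ?_, hFt⟩
  rintro rfl
  linarith

lemma cos_mem_Ioo_of_mem_Ioo {l : ℝ} (hl : l ∈ Ioo 0 π) : cos l ∈ Ioo (-1) 1 := by
  constructor
  · simpa using cos_lt_cos_of_nonneg_of_le_pi hl.1.le le_rfl hl.2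
  · simpa using cos_lt_cos_of_nonneg_of_le_pi le_rfl hl.2.le hl.1

lemma exists_isSpacelikeTriangle_sLen_eq {l₁ l₂ l₃ : ℝ} (h₁ : l₁ ∈ Ioo 0 π) (h₂ : l₂ ∈ Ioo 0 π)
    (h₃ : l₃ ∈ Ioo 0 π) (hsum : 2 * π < l₁ + l₂ + l₃) :
    ∃ v, IsSpacelikeTriangle v ∧
      sLen (v 0) (v 1) = l₁ ∧ sLen (v 1) (v 2) = l₂ ∧ sLen (v 0) (v 2) = l₃ := by
  have hc₁ := cos_mem_Ioo_of_mem_Ioo h₁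
  have hc₂ := cos_mem_Ioo_of_mem_Ioo h₂
  have hc₃ := cos_mem_Ioo_of_mem_Ioo h₃
  have harccos : ∀ {l}, l ∈ Ioo 0 π → arccos (cos l) = l := fun hl => arccos_cos hl.1.le hl.2.le
  obtain ⟨t, ht, hθ⟩ := exists_centralAngle_sum_eq_two_pi hc₁ hc₂ hc₃
    (by rwa [harccos h₁, harccos h₂, harccos h₃])
  set θ₁ := centralAngle t (cos l₁)
  set θ₂ := centralAngle t (cos l₂)
  set θ₃ := centralAngle t (cos l₃)
  have hsin : ∀ {c}, c ∈ Ioo (-1) 1 → 0 < sin (centralAngle t c) := fun hc =>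
    sin_pos_of_pos_of_lt_pi (centralAngle_mem_Ioo hc t).1 (centralAngle_mem_Ioo hc t).2
  have e₁ : mink (dsPoint t 0) (dsPoint t θ₁) = cos l₁ := by
    rw [mink_dsPoint, sub_zero, cosh_sq_mul_cos_centralAngle hc₁]
  have e₂ : mink (dsPoint t θ₁) (dsPoint t (θ₁ + θ₂)) = cos l₂ := by
    rw [mink_dsPoint, add_sub_cancel_left, cosh_sq_mul_cos_centralAngle hc₂]
  have hθ₃ : 0 - (θ₁ + θ₂) = θ₃ - 2 * π := by linarith
  have e₃ : mink (dsPoint t (θ₁ + θ₂)) (dsPoint t 0) = cos l₃ := by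
    rw [mink_dsPoint, hθ₃, cos_sub_two_pi, cosh_sq_mul_cos_centralAngle hc₃]
  have hsinh : 0 < sinh t := sinh_pos_iff.2 ht
  refine ⟨![dsPoint t 0, dsPoint t θ₁, dsPoint t (θ₁ + θ₂)], ⟨fun i => ?_, ?_⟩, ?_, ?_, ?_⟩
  · fin_cases i <;> exact ⟨mink_dsPoint_self _ _, hsinh⟩
  · refine closedBall_subset_interior_dsHull (fun i => by fin_cases i <;> exact hsinh)
      (isFutureTimelike_cross_dsPoint ?_ ?_) (isFutureTimelike_cross_dsPoint ?_ ?_)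
      (isFutureTimelike_cross_dsPoint ?_ ?_)
    · rw [e₂]; exact abs_lt.2 hc₂
    · rw [add_sub_cancel_left]; exact hsin hc₂
    · rw [e₃]; exact abs_lt.2 hc₃
    · rw [hθ₃, sin_sub_two_pi]; exact hsin hc₃
    · rw [e₁]; exact abs_lt.2 hc₁
    · rw [sub_zero]; exact hsin hc₁
  · exact (congrArg arccos e₁).trans (harccos h₁)
  · exact (congrArg arccos e₂).trans (harccos h₂)
  · exact (congrArg arccos ((mink_comm _ _).trans e₃)).trans (harccos h₃)

/-- The sum of the edge lengths of any space-like triangle in the de Sitter plane is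
strictly greater than `2π`; conversely, given `l₁, l₂, l₃ ∈ (0,π)` with sum `> 2π`,
there is a space-like triangle with those edge lengths, unique up to (Lorentz)
isometry. -/
theorem stmt_6 :
    (∀ v, IsSpacelikeTriangle v →
      2 * Real.pi < sLen (v 0) (v 1) + sLen (v 1) (v 2) + sLen (v 0) (v 2)) ∧
    (∀ l₁ l₂ l₃ : ℝ, l₁ ∈ Set.Ioo 0 Real.pi → l₂ ∈ Set.Ioo 0 Real.pi →
      l₃ ∈ Set.Ioo 0 Real.pi → 2 * Real.pi < l₁ + l₂ + l₃ →
      (∃ v, IsSpacelikeTriangle v ∧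
        sLen (v 0) (v 1) = l₁ ∧ sLen (v 1) (v 2) = l₂ ∧ sLen (v 0) (v 2) = l₃) ∧
      (∀ v w, IsSpacelikeTriangle v → IsSpacelikeTriangle w →
        sLen (v 0) (v 1) = l₁ → sLen (v 1) (v 2) = l₂ → sLen (v 0) (v 2) = l₃ →
        sLen (w 0) (w 1) = l₁ → sLen (w 1) (w 2) = l₂ → sLen (w 0) (w 2) = l₃ →
        ∃ g : (Fin 3 → ℝ) →ₗ[ℝ] (Fin 3 → ℝ),
          (∀ x y, mink (g x) (g y) = mink x y) ∧ ∀ i, g (v i) = w i)) :=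
  ⟨fun _ h => h.two_pi_lt_perimeter, fun _ _ _ h₁ h₂ h₃ hsum =>
    ⟨exists_isSpacelikeTriangle_sLen_eq h₁ h₂ h₃ hsum,
      fun _ _ hv hw hv₁ hv₂ hv₃ hw₁ hw₂ hw₃ => hv.exists_isometry_of_sLen_eq hw
        (hv₁.trans hw₁.symm) (hv₂.trans hw₂.symm) (hv₃.trans hw₃.symm)⟩⟩
end
end

section
/- For a triangulation of the 2-sphere with p strictly hyperideal and q ideal vertices, the number of edges equals 3(p+q) − 6, and the q linear constraints 'the sum of the exterior dihedral angles at the edges adjacent to an ideal vertex equals 2π' are linearly independent, so the space of angle assignations has dimension 3p + 2q − 6. -/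
/-- For a triangulation of the 2-sphere (encoded combinatorially: vertex set `V` of
cardinality `p + q` with a subset `Vi` of `q` ideal vertices, edge set `E`, face set
`F` of triangles, every vertex lying in a face, satisfying the Euler relation
`V - E + F = 2` and the incidence count `3F = 2E`):
the number of edges is `3(p+q) - 6`; the `q` linear constraints at the ideal vertices
are linearly independent, in the sense that any coefficients `a` vanishing on the
strictly hyperideal vertices and with vanishing sum on the endpoints of every edge
vanish identically; hence the space of angle assignations has dimension
`E - q = 3p + 2q - 6`. -/
theorem stmt_15 {α : Type*} [DecidableEq α] (p q : ℕ)
    (V Vi : Finset α) (E : Finset (Sym2 α)) (F : Finset (Finset α))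
    (hViV : Vi ⊆ V) (hVcard : V.card = p + q) (hVicard : Vi.card = q)
    (hface : ∀ f ∈ F, f.card = 3 ∧ f ⊆ V ∧
      ∀ u ∈ f, ∀ w ∈ f, u ≠ w → s(u, w) ∈ E)
    (hcover : ∀ v ∈ V, ∃ f ∈ F, v ∈ f)
    (heuler : (V.card : ℤ) - (E.card : ℤ) + (F.card : ℤ) = 2)
    (hcount : 3 * F.card = 2 * E.card) :
    (E.card : ℤ) = 3 * (p + q) - 6 ∧
    (∀ a : α → ℝ, (∀ v ∈ V, v ∉ Vi → a v = 0) →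
      (∀ u w : α, s(u, w) ∈ E → a u + a w = 0) →
      ∀ v ∈ V, a v = 0) ∧
    (E.card : ℤ) - (q : ℤ) = 3 * p + 2 * q - 6 := by
  have hE : (E.card : ℤ) = 3 * (p + q) - 6 := by
    have hc : (3 : ℤ) * F.card = 2 * E.card := by exact_mod_cast hcount
    rw [hVcard] at heuler
    push_cast at heuler ⊢
    linarith
  refine ⟨hE, ?_, by omega⟩
  intro a ha hedge v hv
  obtain ⟨f, hfF, hvf⟩ := hcover v hv
  obtain ⟨h3, hfV, hE'⟩ := hface f hfF
  obtain ⟨x, y, z, hxy, hxz, hyz, hf⟩ := Finset.card_eq_three.mp h3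
  have hx : x ∈ f := by rw [hf]; simp
  have hy : y ∈ f := by rw [hf]; simp
  have hz : z ∈ f := by rw [hf]; simp
  have e1 := hedge x y (hE' x hx y hy hxy)
  have e2 := hedge x z (hE' x hx z hz hxz)
  have e3 := hedge y z (hE' y hy z hz hyz)
  have hx0 : a x = 0 := by linarith
  have hy0 : a y = 0 := by linarith
  have hz0 : a z = 0 := by linarith
  rw [hf] at hvf
  simp at hvf
  rcases hvf with h|h|h <;> rw [h] <;> assumption
end
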